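/- Let T be the tensor of order 4 and dimension 2 with entries T_{1122} = T_{2211} = 1 and all other entries zero (a CPS tensor). Then: (1) for every z in ℂ² with ‖z‖ = 1, |conj(z_1)² z_2² + conj(z_2)² z_1²| ≤ 1/2; (2) for every λ in ℝ and every z in ℂ² with ‖z‖ = 1, ‖T − λ conj(z)⊗conj(z)⊗z⊗z‖² ≥ 7/4; and (3) ‖T − e_1⊗e_1⊗e_2⊗e_2‖² = 1, where e_1, e_2 are the standard unit vectors of ℂ². Hence the infimum of ‖T − X‖ over rank-one CPS tensors X is strictly larger than the infimum of ‖T − X‖ over rank-one complex tensors X. -/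

import Mathlib

open scoped BigOperators
open ComplexConjugate

/-- The rank of a complex tensor of order 4 and dimension 2 (two-block index form):
the smallest `r` such that `T` is a sum of `r` rank-one tensors `a⊗b⊗c⊗d`. -/
noncomputable def tRank {n d : ℕ} (T : (Fin d → Fin n) → (Fin d → Fin n) → ℂ) : ℕ :=
  sInf {r : ℕ | ∃ a b : Fin r → Fin d → Fin n → ℂ,
    ∀ i j, T i j = ∑ s, (∏ k, a s k (i k)) * ∏ k, b s k (j k)}

/-- The order-4, dimension-2 tensor with `T_{1122} = T_{2211} = 1`, other entries zero. -/
def T12 : (Fin 2 → Fin 2) → (Fin 2 → Fin 2) → ℂ := fun p q =>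
  if (p 0 = 0 ∧ p 1 = 0 ∧ q 0 = 1 ∧ q 1 = 1) ∨
     (p 0 = 1 ∧ p 1 = 1 ∧ q 0 = 0 ∧ q 1 = 0) then 1 else 0

/-- The rank-one CPS tensor `λ conj(z) ⊗ conj(z) ⊗ z ⊗ z`. -/
def rk1CPS (l : ℝ) (z : Fin 2 → ℂ) : (Fin 2 → Fin 2) → (Fin 2 → Fin 2) → ℂ :=
  fun p q => (l : ℂ) * ((∏ k, conj (z (p k))) * ∏ k, z (q k))

/-- The standard unit vectors of `ℂ²`. -/
def e1 : Fin 2 → ℂ := fun i => if i = 0 then 1 else 0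
def e2 : Fin 2 → ℂ := fun i => if i = 1 then 1 else 0

/-- The rank-one tensor `e₁ ⊗ e₁ ⊗ e₂ ⊗ e₂`. -/
def E12 : (Fin 2 → Fin 2) → (Fin 2 → Fin 2) → ℂ :=
  fun p q => e1 (p 0) * e1 (p 1) * e2 (q 0) * e2 (q 1)

/-!
Write `w = conj(z₁)² z₂²`. The only entries of `λ z̄⊗z̄⊗z⊗z` on the support of `T` are `λ w`
and `λ w̄`, so `‖T - λ z̄⊗z̄⊗z⊗z‖² = 2 - 4 λ Re w + λ² ‖z‖⁸`. As `|w| = |z₁|²|z₂|² ≤ ‖z‖⁴/4`,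
this is at least `2 - 4 λ Re w + 16 λ² (Re w)² = 7/4 + (4 λ Re w - 1/2)²`, whereas the
non-symmetric rank-one tensor `e₁⊗e₁⊗e₂⊗e₂` lies at distance `1` from `T`.
-/

open Complex

lemma sum_fun_fin_two {M : Type*} [AddCommMonoid M] (f : (Fin 2 → Fin 2) → M) :
    ∑ p, f p = f ![0, 0] + f ![0, 1] + f ![1, 0] + f ![1, 1] := by
  rw [← (piFinTwoEquiv fun _ => Fin 2).symm.sum_comp, Fintype.sum_prod_type]
  simp only [Fin.sum_univ_two, piFinTwoEquiv_symm_apply, add_assoc]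
  rfl

lemma norm_conj_sq_mul_sq (x y : ℂ) : ‖conj x ^ 2 * y ^ 2‖ = normSq x * normSq y := by
  rw [norm_mul, norm_pow, norm_pow, norm_conj, Complex.sq_norm, Complex.sq_norm]

lemma norm_conj_sq_mul_sq_add_le (x y : ℂ) :
    ‖conj x ^ 2 * y ^ 2 + conj y ^ 2 * x ^ 2‖ ≤ (normSq x + normSq y) ^ 2 / 2 := by
  calc ‖conj x ^ 2 * y ^ 2 + conj y ^ 2 * x ^ 2‖
      ≤ ‖conj x ^ 2 * y ^ 2‖ + ‖conj y ^ 2 * x ^ 2‖ := norm_add_le _ _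
    _ = 2 * (normSq x * normSq y) := by
      rw [norm_conj_sq_mul_sq, norm_conj_sq_mul_sq, mul_comm (normSq y)]; ring
    _ ≤ (normSq x + normSq y) ^ 2 / 2 := by nlinarith [sq_nonneg (normSq x - normSq y)]

lemma sum_normSq_sub_rk1CPS (l : ℝ) (z : Fin 2 → ℂ) :
    ∑ p, ∑ q, normSq (T12 p q - rk1CPS l z p q)
      = 2 - 4 * l * (conj (z 0) ^ 2 * z 1 ^ 2).re
        + l ^ 2 * (normSq (z 0) + normSq (z 1)) ^ 4 := by
  simp only [sum_fun_fin_two]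
  simp only [T12, rk1CPS, Fin.isValue, Matrix.cons_val_zero, Matrix.cons_val_one,
    Matrix.cons_val_fin_one, zero_ne_one, one_ne_zero, and_self, and_false, and_true, or_self,
    or_false, or_true, ↓reduceIte, Fin.prod_univ_two, zero_sub, normSq_apply, neg_re, neg_im,
    mul_re, mul_im, ofReal_re, ofReal_im, conj_re, conj_im, sub_re, sub_im, one_re, one_im,
    mul_neg, neg_mul, neg_neg, zero_mul, sub_zero, add_zero, pow_two]
  ring

lemma seven_fourths_le (l u a b : ℝ) (ha : 0 ≤ a) (hb : 0 ≤ b) (hu : |u| ≤ a * b) :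
    7 / 4 ≤ 2 - 4 * l * u + l ^ 2 * (a + b) ^ 4 := by
  have h4 : 16 * u ^ 2 ≤ (a + b) ^ 4 := by
    have : u ^ 2 ≤ (a * b) ^ 2 := sq_le_sq' (abs_le.mp hu).1 (abs_le.mp hu).2
    nlinarith [sq_nonneg (a - b), mul_nonneg ha hb]
  nlinarith [sq_nonneg (4 * l * u - 1 / 2), mul_le_mul_of_nonneg_left h4 (sq_nonneg l)]

lemma seven_fourths_le_sum_normSq_sub_rk1CPS (l : ℝ) (z : Fin 2 → ℂ) :
    7 / 4 ≤ ∑ p, ∑ q, normSq (T12 p q - rk1CPS l z p q) := by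
  rw [sum_normSq_sub_rk1CPS]
  refine seven_fourths_le l _ _ _ (normSq_nonneg _) (normSq_nonneg _) ?_
  exact (abs_re_le_norm _).trans (norm_conj_sq_mul_sq _ _).le

lemma sum_normSq_sub_E12 : ∑ p, ∑ q, normSq (T12 p q - E12 p q) = 1 := by
  simp only [sum_fun_fin_two]
  simp [T12, E12, e1, e2]

lemma tRank_E12 : tRank E12 = 1 := by
  have h1 : 1 ∈ {r : ℕ | ∃ a b : Fin r → Fin 2 → Fin 2 → ℂ,
      ∀ i j, E12 i j = ∑ s, (∏ k, a s k (i k)) * ∏ k, b s k (j k)} := by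
    refine ⟨fun _ _ => e1, fun _ _ => e2, fun i j => ?_⟩
    simp [E12, Fin.prod_univ_two, mul_assoc]
  have h0 : 0 ∉ {r : ℕ | ∃ a b : Fin r → Fin 2 → Fin 2 → ℂ,
      ∀ i j, E12 i j = ∑ s, (∏ k, a s k (i k)) * ∏ k, b s k (j k)} := by
    rintro ⟨a, b, h⟩
    simpa [E12, e1, e2] using h ![0, 0] ![1, 1]
  refine le_antisymm (Nat.sInf_le h1) (Nat.one_le_iff_ne_zero.mpr ?_)
  rw [tRank, Ne, Nat.sInf_eq_zero, not_or]
  exact ⟨h0, Set.nonempty_iff_ne_empty.mp ⟨1, h1⟩⟩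

theorem stmt12 :
    (∀ z : Fin 2 → ℂ, (∑ i, Complex.normSq (z i)) = 1 →
      ‖(conj (z 0)) ^ 2 * (z 1) ^ 2 + (conj (z 1)) ^ 2 * (z 0) ^ 2‖ ≤ 1 / 2) ∧
    (∀ (l : ℝ) (z : Fin 2 → ℂ), (∑ i, Complex.normSq (z i)) = 1 →
      7 / 4 ≤ ∑ p : Fin 2 → Fin 2, ∑ q : Fin 2 → Fin 2,
        Complex.normSq (T12 p q - rk1CPS l z p q)) ∧
    (∑ p : Fin 2 → Fin 2, ∑ q : Fin 2 → Fin 2,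
        Complex.normSq (T12 p q - E12 p q)) = 1 ∧
    sInf {v : ℝ | ∃ X : (Fin 2 → Fin 2) → (Fin 2 → Fin 2) → ℂ, tRank X = 1 ∧
        v = Real.sqrt (∑ p : Fin 2 → Fin 2, ∑ q : Fin 2 → Fin 2,
          Complex.normSq (T12 p q - X p q))}
      < sInf {v : ℝ | ∃ (l : ℝ) (z : Fin 2 → ℂ), l ≠ 0 ∧
        v = Real.sqrt (∑ p : Fin 2 → Fin 2, ∑ q : Fin 2 → Fin 2,
          Complex.normSq (T12 p q - rk1CPS l z p q))} := by
  refine ⟨fun z hz => ?_, fun l z _ => seven_fourths_le_sum_normSq_sub_rk1CPS l z,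
    sum_normSq_sub_E12, ?_⟩
  · rw [Fin.sum_univ_two] at hz
    simpa [hz] using norm_conj_sq_mul_sq_add_le (z 0) (z 1)
  · calc _ ≤ (1 : ℝ) := by
          refine csInf_le ⟨0, ?_⟩ ⟨E12, tRank_E12, by rw [sum_normSq_sub_E12, Real.sqrt_one]⟩
          rintro v ⟨X, -, rfl⟩
          exact Real.sqrt_nonneg _
      _ < Real.sqrt (7 / 4) := by
          rw [Real.lt_sqrt zero_le_one]; norm_num
      _ ≤ _ := by
          refine le_csInf ⟨_, 1, 0, one_ne_zero, rfl⟩ ?_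
          rintro v ⟨l, z, -, rfl⟩
          exact Real.sqrt_le_sqrt (seven_fourths_le_sum_normSq_sub_rk1CPS l z)
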